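/- arXiv:2311.10503 — 5 statements merged into one kernel-verified Lean document; each statement's English description precedes it below -/
import Mathlib

section
/- For every x > 0, every coherent density matrix ρ (ρ_{mn} ≠ 0 for some m ≠ n) admits a Hermitian matrix W with nonnegative diagonal entries and Tr(W) = x such that Tr(Wρ) < 0. (Completeness of the coherence criterion with prior trace knowledge x.) -/
open Matrix ComplexOrder

/-! A coherence `ρ m n ≠ 0` is detected by the zero-diagonal Hermitian matrix
`W₀ = -(ρ m n • E_mn + ρ n m • E_nm)`, for which `Re Tr(W₀ ρ) = -2 |ρ m n|² < 0`.
With `c = x / d`, the matrix `c • 1 + s • W₀` has diagonal `c` and trace `x`, and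
`Re Tr((c • 1 + s • W₀) ρ) = c + s Re Tr(W₀ ρ)`, which is `-c` for `s = 2c / (-Re Tr(W₀ ρ))`. -/

def IsDensityMatrix {d : ℕ} (ρ : Matrix (Fin d) (Fin d) ℂ) : Prop :=
  ρ.PosSemidef ∧ ρ.trace = 1

namespace Matrix

variable {ι : Type*} [DecidableEq ι]

def offDiagPair {α : Type*} [AddZeroClass α] (A : Matrix ι ι α) (i j : ι) : Matrix ι ι α :=
  single i j (A i j) + single j i (A j i)

theorem IsHermitian.offDiagPair {A : Matrix ι ι ℂ} (hA : A.IsHermitian) (i j : ι) :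
    (A.offDiagPair i j).IsHermitian := by
  rw [IsHermitian, Matrix.offDiagPair, conjTranspose_add, conjTranspose_single,
    conjTranspose_single, hA.apply, hA.apply, add_comm]

theorem offDiagPair_apply_self {α : Type*} [AddZeroClass α] (A : Matrix ι ι α) {i j : ι}
    (hij : i ≠ j) (k : ι) : A.offDiagPair i j k k = 0 := by
  rw [Matrix.offDiagPair, add_apply, single_apply_of_ne, single_apply_of_ne, add_zero] <;>
    rintro ⟨rfl, rfl⟩ <;> exact hij rfl

theorem trace_offDiagPair_mul {α : Type*} [NonUnitalNonAssocSemiring α] [Fintype ι]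
    (A B : Matrix ι ι α) (i j : ι) :
    (A.offDiagPair i j * B).trace = A i j * B j i + A j i * B i j := by
  rw [Matrix.offDiagPair, add_mul, trace_add, trace_single_mul, trace_single_mul, smul_eq_mul,
    smul_eq_mul]

theorem IsHermitian.re_trace_offDiagPair_mul_self [Fintype ι] {A : Matrix ι ι ℂ}
    (hA : A.IsHermitian) (i j : ι) :
    ((A.offDiagPair i j * A).trace).re = 2 * Complex.normSq (A i j) := by
  rw [trace_offDiagPair_mul, ← hA.apply j i, Complex.star_def, Complex.mul_conj,
    mul_comm, Complex.mul_conj]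
  simp only [Complex.add_re, Complex.ofReal_re]
  ring

theorem exists_isHermitian_diag_nonneg_trace_eq_re_trace_mul_neg [Fintype ι] [Nonempty ι]
    {ρ W₀ : Matrix ι ι ℂ} (hρ : ρ.trace = 1) (hW₀ : W₀.IsHermitian) (hdiag : ∀ i, W₀ i i = 0)
    (hneg : ((W₀ * ρ).trace).re < 0) {x : ℝ} (hx : 0 < x) :
    ∃ W : Matrix ι ι ℂ, W.IsHermitian ∧ (∀ i, 0 ≤ (W i i).re) ∧
      W.trace = (x : ℂ) ∧ ((W * ρ).trace).re < 0 := by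
  set r := ((W₀ * ρ).trace).re
  set c : ℝ := x / Fintype.card ι
  have hcard : (Fintype.card ι : ℝ) ≠ 0 := by positivity
  have hc : 0 < c := by positivity
  have htrW₀ : W₀.trace = 0 := Finset.sum_eq_zero fun i _ => hdiag i
  refine ⟨c • 1 + (2 * c / -r) • W₀, ?_, fun i => ?_, ?_, ?_⟩
  · exact (isHermitian_one.smul (IsSelfAdjoint.all c)).add (hW₀.smul (IsSelfAdjoint.all _))
  · simp [hdiag i, hc.le]
  · rw [trace_add, trace_smul, trace_smul, htrW₀, trace_one, smul_zero, add_zero,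
      Complex.real_smul, ← Complex.ofReal_natCast, ← Complex.ofReal_mul, div_mul_cancel₀ x hcard]
  · rw [add_mul, smul_mul_assoc, one_mul, smul_mul_assoc, trace_add, trace_smul, trace_smul,
      hρ, Complex.add_re, Complex.smul_re, Complex.smul_re, Complex.one_re, smul_eq_mul,
      smul_eq_mul, mul_one]
    have : 2 * c / -r * r = -(2 * c) := by field_simp [hneg.ne]
    linarith

end Matrix

theorem stmt_10 {d : ℕ} (x : ℝ) (hx : 0 < x) (ρ : Matrix (Fin d) (Fin d) ℂ)
    (hρ : IsDensityMatrix ρ) (m n : Fin d) (hmn : m ≠ n) (hcoh : ρ m n ≠ 0) :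
    ∃ W : Matrix (Fin d) (Fin d) ℂ, W.IsHermitian ∧ (∀ i, 0 ≤ (W i i).re) ∧
      W.trace = (x : ℂ) ∧ ((W * ρ).trace).re < 0 := by
  have : Nonempty (Fin d) := ⟨m⟩
  have hherm : ρ.IsHermitian := hρ.1.isHermitian
  refine exists_isHermitian_diag_nonneg_trace_eq_re_trace_mul_neg hρ.2 (hherm.offDiagPair m n).neg
    (fun i => by rw [neg_apply, offDiagPair_apply_self ρ hmn, neg_zero]) ?_ hx
  rw [neg_mul, trace_neg, Complex.neg_re, hherm.re_trace_offDiagPair_mul_self]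
  have := Complex.normSq_pos.mpr hcoh
  linarith
end

section
/- Let x > 0. For any finite set {W₁,…,Wₙ} of d×d Hermitian matrices with nonnegative diagonals, trace x, and a negative eigenvalue each, there exists a coherent density matrix ρ such that for every i, 0 ≤ Tr(Wᵢρ) ≤ x. Hence the criterion with prior trace x is not finitely completable. -/
open Matrix ComplexOrder

/-!
Against any `W` of trace `x`, the maximally mixed state `1 / d` has expectation `x / d`, which lies
in the open interval `(0, x)` as soon as `d ≥ 2`. Mixing in a small proportion `t` of a coherent
pure state makes an off-diagonal entry nonzero, and by continuity in `t` the finitely many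
expectations stay inside `(0, x)`.
-/

theorem exists_forall_lineMap_mem_of_isOpen {ι E : Type*} [Finite ι] [TopologicalSpace E]
    [AddCommGroup E] [IsTopologicalAddGroup E] [Module ℝ E] [ContinuousSMul ℝ E]
    {s : Set E} (hs : IsOpen s) {p : E} (hp : p ∈ s) (q : ι → E) :
    ∃ t ∈ Set.Ioo (0 : ℝ) 1, ∀ i, AffineMap.lineMap p (q i) t ∈ s := by
  have hnear : ∀ i, ∀ᶠ t in nhdsWithin (0 : ℝ) (Set.Ioi 0), AffineMap.lineMap p (q i) t ∈ s :=
    fun i => nhdsWithin_le_nhds <| AffineMap.lineMap_continuous.continuousAt.eventually_mem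
      (by simpa using hs.mem_nhds hp)
  exact ((Filter.eventually_all.2 hnear).and (Ioo_mem_nhdsGT one_pos)).exists.imp
    fun t ht => ⟨ht.2, ht.1⟩

variable {d : ℕ}

theorem convex_setOf_isDensityMatrix :
    Convex ℝ {ρ : Matrix (Fin d) (Fin d) ℂ | IsDensityMatrix ρ} := by
  rintro ρ ⟨hρ, hρtr⟩ σ ⟨hσ, hσtr⟩ s t hs ht hst
  refine ⟨(hρ.smul hs).add (hσ.smul ht), ?_⟩
  simp [trace_add, trace_smul, hρtr, hσtr, ← Complex.ofReal_add, hst]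

theorem IsDensityMatrix.inv_trace_smul {A : Matrix (Fin d) (Fin d) ℂ} (hA : A.PosSemidef)
    (htr : A.trace ≠ 0) : IsDensityMatrix (A.trace⁻¹ • A) :=
  ⟨hA.smul (by simpa using hA.trace_nonneg), by rw [trace_smul, smul_eq_mul, inv_mul_cancel₀ htr]⟩

theorem isDensityMatrix_inv_natCast_smul_one (hd : d ≠ 0) :
    IsDensityMatrix ((d : ℂ)⁻¹ • (1 : Matrix (Fin d) (Fin d) ℂ)) := by
  simpa using IsDensityMatrix.inv_trace_smul PosSemidef.one (by simpa using hd)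

theorem exists_isDensityMatrix_apply_ne_zero {a b : Fin d} (hab : a ≠ b) :
    ∃ σ, IsDensityMatrix σ ∧ σ a b ≠ 0 := by
  set u : Fin d → ℂ := Pi.single a 1 + Pi.single b 1
  have htr : (vecMulVec u (star u)).trace = 2 := by
    simp [u, hab, hab.symm, one_add_one_eq_two]
  refine ⟨_, IsDensityMatrix.inv_trace_smul (posSemidef_vecMulVec_self_star u) (by simp [htr]), ?_⟩
  simp [u, vecMulVec_apply, hab, hab.symm]

theorem re_trace_mul_lineMap (W ρ σ : Matrix (Fin d) (Fin d) ℂ) (t : ℝ) :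
    (W * AffineMap.lineMap ρ σ t).trace.re =
      AffineMap.lineMap (W * ρ).trace.re (W * σ).trace.re t := by
  simp [AffineMap.lineMap_apply_module, Matrix.mul_add, trace_add, trace_smul]

theorem stmt_11_general {d : ℕ} (hd : 2 ≤ d) (x : ℝ) (hx : 0 < x) (n : ℕ)
    (W : Fin n → Matrix (Fin d) (Fin d) ℂ)
    (htr : ∀ i, (W i).trace = (x : ℂ)) :
    ∃ ρ : Matrix (Fin d) (Fin d) ℂ, IsDensityMatrix ρ ∧
      (∃ a b : Fin d, a ≠ b ∧ ρ a b ≠ 0) ∧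
      ∀ i, 0 ≤ ((W i * ρ).trace).re ∧ ((W i * ρ).trace).re ≤ x := by
  let a : Fin d := ⟨0, by omega⟩
  let b : Fin d := ⟨1, by omega⟩
  have hab : a ≠ b := by simp [a, b, Fin.ext_iff]
  set ρ₀ : Matrix (Fin d) (Fin d) ℂ := (d : ℂ)⁻¹ • 1
  obtain ⟨σ, hσ, hσab⟩ := exists_isDensityMatrix_apply_ne_zero hab
  have hρ₀ : ∀ i, (W i * ρ₀).trace.re = x / d := fun i => by
    rw [Matrix.mul_smul, Matrix.mul_one, trace_smul, htr i, smul_eq_mul, ← Complex.ofReal_natCast,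
      ← Complex.ofReal_inv, ← Complex.ofReal_mul, Complex.ofReal_re, inv_mul_eq_div]
  have hmixed : x / d ∈ Set.Ioo 0 x :=
    ⟨by positivity, div_lt_self hx (by exact_mod_cast (by omega : 1 < d))⟩
  obtain ⟨t, ⟨ht₀, ht₁⟩, hmem⟩ :=
    exists_forall_lineMap_mem_of_isOpen isOpen_Ioo hmixed fun i => (W i * σ).trace.re
  refine ⟨AffineMap.lineMap ρ₀ σ t,
    convex_setOf_isDensityMatrix.lineMap_mem (isDensityMatrix_inv_natCast_smul_one (by omega)) hσ
      ⟨ht₀.le, ht₁.le⟩, ⟨a, b, hab, ?_⟩, fun i => ?_⟩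
  · simp [AffineMap.lineMap_apply_module, ρ₀, hab, ht₀.ne', hσab]
  · rw [re_trace_mul_lineMap, hρ₀]
    exact ⟨(hmem i).1.le, (hmem i).2.le⟩

theorem stmt_11 {d : ℕ} (hd : 2 ≤ d) (x : ℝ) (hx : 0 < x) (n : ℕ)
    (W : Fin n → Matrix (Fin d) (Fin d) ℂ)
    (hHerm : ∀ i, (W i).IsHermitian) (hdiag : ∀ i j, 0 ≤ (W i j j).re)
    (htr : ∀ i, (W i).trace = (x : ℂ)) (hneg : ∀ i, ¬ (W i).PosSemidef) :
    ∃ ρ : Matrix (Fin d) (Fin d) ℂ, IsDensityMatrix ρ ∧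
      (∃ a b : Fin d, a ≠ b ∧ ρ a b ≠ 0) ∧
      ∀ i, 0 ≤ ((W i * ρ).trace).re ∧ ((W i * ρ).trace).re ≤ x :=
  stmt_11_general hd x hx n W htr
end

section
/- Let x > 0 and let W₁,…,Wₙ be Hermitian matrices with nonnegative diagonals and trace x. Suppose that for every subset S of {1,…,n} with |S| ≥ ⌈n/2⌉ there exist positive weights t_i (i ∈ S) summing to 1 such that Σ_{i∈S} t_i W_i is positive semidefinite. Then no density matrix ρ satisfies, for all i, (Tr(Wᵢρ) < 0 or Tr(Wᵢρ) > x); i.e., ⋂ᵢ C_x[Wᵢ] = ∅. -/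
/-!
For positive semidefinite `A` and a density matrix `ρ` we have `0 ≤ Tr(Aρ) ≤ Tr A`, the upper
bound because `ρ ≤ (Tr ρ) • 1` (every eigenvalue of `ρ` is at most their sum). If `ρ` lay in every
`C_x[Wᵢ]`, at least `⌈n/2⌉` of the values `Tr(Wᵢρ)` would lie on the same side of `[0, x]`. The
hypothesis gives a positive semidefinite convex combination `A` of those `Wᵢ`, with `Tr A = x`;
then `Tr(Aρ)`, the same convex combination of those values, lies on that side as well.
-/

open Matrix ComplexOrder

namespace Matrix

variable {n 𝕜 : Type*} [Fintype n] [RCLike 𝕜]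

theorem PosSemidef.re_trace_mul_nonneg {A B : Matrix n n 𝕜} (hA : A.PosSemidef)
    (hB : B.PosSemidef) : 0 ≤ RCLike.re (A * B).trace := by
  classical
  open MatrixOrder in obtain ⟨C, rfl⟩ := CStarAlgebra.nonneg_iff_eq_star_mul_self.mp hB.nonneg
  rw [← Matrix.mul_assoc, trace_mul_cycle]
  exact (RCLike.nonneg_iff.mp (hA.mul_mul_conjTranspose_same C).trace_nonneg).1

theorem PosSemidef.eigenvalues_le_re_trace [DecidableEq n] {A : Matrix n n 𝕜}
    (hA : A.PosSemidef) (i : n) : hA.1.eigenvalues i ≤ RCLike.re A.trace := by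
  rw [hA.1.trace_eq_sum_eigenvalues, ← RCLike.ofReal_sum, RCLike.ofReal_re]
  exact Finset.single_le_sum (fun j _ => hA.eigenvalues_nonneg j) (Finset.mem_univ i)

open MatrixOrder in
theorem PosSemidef.posSemidef_re_trace_smul_one_sub [DecidableEq n] {A : Matrix n n 𝕜}
    (hA : A.PosSemidef) : (RCLike.re A.trace • 1 - A).PosSemidef := by
  rw [← le_iff, ← Algebra.algebraMap_eq_smul_one]
  refine le_algebraMap_of_spectrum_le fun r hr => ?_
  obtain ⟨i, rfl⟩ := hA.1.spectrum_real_eq_range_eigenvalues ▸ hr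
  exact hA.eigenvalues_le_re_trace i

theorem PosSemidef.re_trace_mul_le {A B : Matrix n n 𝕜} (hA : A.PosSemidef)
    (hB : B.PosSemidef) : RCLike.re (A * B).trace ≤ RCLike.re A.trace * RCLike.re B.trace := by
  classical
  have := hA.re_trace_mul_nonneg hB.posSemidef_re_trace_smul_one_sub
  simp only [mul_sub, mul_smul_comm, mul_one, trace_sub, trace_smul, map_sub,
    RCLike.smul_re] at this
  linarith

theorem re_trace_sum_smul {ι : Type*} (s : Finset ι) (t : ι → ℝ) (W : ι → Matrix n n 𝕜) :
    RCLike.re (∑ i ∈ s, t i • W i).trace = ∑ i ∈ s, t i * RCLike.re (W i).trace := by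
  simp [trace_sum, trace_smul, RCLike.smul_re]

theorem re_trace_sum_smul_mul {ι : Type*} (s : Finset ι) (t : ι → ℝ) (W : ι → Matrix n n 𝕜)
    (B : Matrix n n 𝕜) : RCLike.re ((∑ i ∈ s, t i • W i) * B).trace =
      ∑ i ∈ s, t i * RCLike.re (W i * B).trace := by
  simp only [Finset.sum_mul, smul_mul, re_trace_sum_smul]

end Matrix

theorem stmt_13_general {d : ℕ} (x : ℝ) (n : ℕ)
    (W : Fin n → Matrix (Fin d) (Fin d) ℂ)
    (htr : ∀ i, (W i).trace = (x : ℂ))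
    (hsub : ∀ S : Finset (Fin n), (n + 1) / 2 ≤ S.card →
      ∃ t : Fin n → ℝ, (∀ i ∈ S, 0 < t i) ∧ (∑ i ∈ S, t i) = 1 ∧
        (∑ i ∈ S, ((t i : ℂ) • W i)).PosSemidef) :
    ¬ ∃ ρ : Matrix (Fin d) (Fin d) ℂ, IsDensityMatrix ρ ∧
      ∀ i, ((W i * ρ).trace).re < 0 ∨ x < ((W i * ρ).trace).re := by
  classical
  rintro ⟨ρ, ⟨hρ, hρ_tr⟩, hW⟩
  simp only [← RCLike.re_to_complex] at hW
  simp only [Complex.coe_smul] at hsub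
  set S := Finset.univ.filter fun i => RCLike.re (W i * ρ).trace < 0
  set T := Finset.univ.filter fun i => ¬ RCLike.re (W i * ρ).trace < 0
  have hST : S.card + T.card = n := by
    rw [Finset.card_filter_add_card_filter_not, Finset.card_univ, Fintype.card_fin]
  by_cases hS : (n + 1) / 2 ≤ S.card
  · obtain ⟨t, ht_pos, ht_sum, hA⟩ := hsub S hS
    have hneg : RCLike.re ((∑ i ∈ S, t i • W i) * ρ).trace < 0 := by
      rw [re_trace_sum_smul_mul]
      exact (convex_Iio (0 : ℝ)).sum_mem (fun i hi => (ht_pos i hi).le) ht_sum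
        fun i hi => (Finset.mem_filter.mp hi).2
    exact hneg.not_ge (hA.re_trace_mul_nonneg hρ)
  · obtain ⟨t, ht_pos, ht_sum, hA⟩ := hsub T (by omega)
    have hgt : x < RCLike.re ((∑ i ∈ T, t i • W i) * ρ).trace := by
      rw [re_trace_sum_smul_mul]
      exact (convex_Ioi x).sum_mem (fun i hi => (ht_pos i hi).le) ht_sum
        fun i hi => (hW i).resolve_left (Finset.mem_filter.mp hi).2
    have htrA : RCLike.re (∑ i ∈ T, t i • W i).trace = x := by
      simp only [re_trace_sum_smul, htr, RCLike.re_to_complex, Complex.ofReal_re,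
        ← Finset.sum_mul, ht_sum, one_mul]
    have hle := hA.re_trace_mul_le hρ
    rw [htrA, hρ_tr, RCLike.one_re, mul_one] at hle
    linarith

theorem stmt_13 {d : ℕ} (x : ℝ) (hx : 0 < x) (n : ℕ)
    (W : Fin n → Matrix (Fin d) (Fin d) ℂ)
    (hHerm : ∀ i, (W i).IsHermitian) (hdiag : ∀ i j, 0 ≤ (W i j j).re)
    (htr : ∀ i, (W i).trace = (x : ℂ))
    (hsub : ∀ S : Finset (Fin n), (n + 1) / 2 ≤ S.card →
      ∃ t : Fin n → ℝ, (∀ i ∈ S, 0 < t i) ∧ (∑ i ∈ S, t i) = 1 ∧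
        (∑ i ∈ S, ((t i : ℂ) • W i)).PosSemidef) :
    ¬ ∃ ρ : Matrix (Fin d) (Fin d) ℂ, IsDensityMatrix ρ ∧
      ∀ i, ((W i * ρ).trace).re < 0 ∨ x < ((W i * ρ).trace).re :=
  stmt_13_general x n W htr hsub
end

section
/- Let W be a d×d Hermitian matrix with both a positive and a negative eigenvalue. Then the complex span of S_W = {ρ density matrix : Tr(Wρ) = 0} equals M_W = {X ∈ Mat_d(ℂ) : Tr(WX) = 0}. -/
open Matrix ComplexOrder

/-! `M_W` is the kernel of the functional `X ↦ Tr (W X)`, so it contains the span of `S_W`.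
Conversely, adding to the identity suitable multiples of the eigenprojections of a positive and of
a negative eigenvalue of `W` gives a matrix `1 + Q ≥ 1` in `M_W`. A Hermitian `H ∈ M_W` satisfies
`c + H ≥ 0` for `c = ‖H‖`, so `H = (c (1 + Q) + H) - c (1 + Q)` is a difference of positive
semidefinite elements of `M_W`, each a multiple of a density matrix in `S_W`. Finally every
`X ∈ M_W` is `ℜ X + i ℑ X`, whose Hermitian parts again lie in `M_W` because `W` is Hermitian. -/

open scoped ComplexStarModule

namespace Matrix

section

variable {n : Type*} [Fintype n] [DecidableEq n]

open scoped Norms.L2Operator MatrixOrder in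
lemma IsHermitian.exists_posSemidef_smul_one_add {H : Matrix n n ℂ} (hH : H.IsHermitian) :
    ∃ c : ℝ, 0 ≤ c ∧ ((c : ℂ) • (1 : Matrix n n ℂ) + H).PosSemidef := by
  refine ⟨‖H‖, norm_nonneg H, ?_⟩
  have := hH.isSelfAdjoint.neg_algebraMap_norm_le_self
  rw [le_iff, sub_neg_eq_add, add_comm, Algebra.algebraMap_eq_smul_one] at this
  simpa using this

lemma IsHermitian.trace_mul_vecMulVec_eigenvectorBasis {W : Matrix n n ℂ} (hW : W.IsHermitian)
    (i : n) :
    (W * vecMulVec ⇑(hW.eigenvectorBasis i) (star ⇑(hW.eigenvectorBasis i))).trace =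
      hW.eigenvalues i := by
  rw [mul_vecMulVec, trace_vecMulVec, hW.mulVec_eigenvectorBasis, smul_dotProduct,
    ← EuclideanSpace.inner_eq_star_dotProduct, inner_self_eq_norm_sq_to_K,
    hW.eigenvectorBasis.orthonormal.1 i]
  simp

lemma IsHermitian.exists_posSemidef_trace_mul_one_add_eq_zero {W : Matrix n n ℂ}
    (hW : W.IsHermitian) (hpos : ∃ i, 0 < hW.eigenvalues i) (hneg : ∃ j, hW.eigenvalues j < 0) :
    ∃ Q : Matrix n n ℂ, Q.PosSemidef ∧ (W * (1 + Q)).trace = 0 := by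
  obtain ⟨i, hi⟩ := hpos
  obtain ⟨j, hj⟩ := hneg
  set a := ∑ k, hW.eigenvalues k with ha
  set P : n → Matrix n n ℂ := fun k =>
    vecMulVec ⇑(hW.eigenvectorBasis k) (star ⇑(hW.eigenvectorBasis k))
  have hP (k : n) : (P k).PosSemidef := posSemidef_vecMulVec_self_star _
  have hs : 0 ≤ a⁻ / hW.eigenvalues i := div_nonneg (negPart_nonneg a) hi.le
  have ht : 0 ≤ a⁺ / -hW.eigenvalues j := div_nonneg (posPart_nonneg a) (neg_nonneg.2 hj.le)
  -- `Tr (W P k) = λ k`, so these weights cancel `Tr W = a⁺ - a⁻`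
  refine ⟨((a⁻ / hW.eigenvalues i : ℝ) : ℂ) • P i + ((a⁺ / -hW.eigenvalues j : ℝ) : ℂ) • P j,
    ((hP i).smul (by exact_mod_cast hs)).add ((hP j).smul (by exact_mod_cast ht)), ?_⟩
  rw [mul_add, mul_one, mul_add, Matrix.mul_smul, Matrix.mul_smul, trace_add, trace_add,
    trace_smul, trace_smul, hW.trace_eq_sum_eigenvalues, hW.trace_mul_vecMulVec_eigenvectorBasis,
    hW.trace_mul_vecMulVec_eigenvectorBasis]
  have key : a + a⁻ / hW.eigenvalues i * hW.eigenvalues i +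
      a⁺ / -hW.eigenvalues j * hW.eigenvalues j = 0 := by
    rw [div_mul_cancel₀ _ hi.ne', div_neg, neg_mul, div_mul_cancel₀ _ hj.ne]
    linarith [posPart_sub_negPart a]
  rw [← RCLike.ofReal_sum, ← ha, smul_eq_mul, smul_eq_mul, ← add_assoc]
  have := congrArg ((↑) : ℝ → ℂ) key
  push_cast at this ⊢
  exact this

def traceOrthogonal (W : Matrix n n ℂ) : Submodule ℂ (Matrix n n ℂ) :=
  LinearMap.ker (traceLinearMap n ℂ ℂ ∘ₗ LinearMap.mulLeft ℂ W)

@[simp]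
lemma mem_traceOrthogonal {W X : Matrix n n ℂ} : X ∈ traceOrthogonal W ↔ (W * X).trace = 0 :=
  Iff.rfl

lemma IsHermitian.star_mem_traceOrthogonal {W X : Matrix n n ℂ} (hW : W.IsHermitian)
    (hX : X ∈ traceOrthogonal W) : star X ∈ traceOrthogonal W := by
  rw [mem_traceOrthogonal] at hX ⊢
  rw [star_eq_conjTranspose, ← hW.eq, ← conjTranspose_mul, trace_conjTranspose,
    trace_mul_comm, hX, star_zero]

lemma IsHermitian.realPart_mem_traceOrthogonal {W X : Matrix n n ℂ} (hW : W.IsHermitian)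
    (hX : X ∈ traceOrthogonal W) : (ℜ X : Matrix n n ℂ) ∈ traceOrthogonal W := by
  rw [realPart_apply_coe]
  exact Submodule.smul_of_tower_mem _ _ (add_mem hX (hW.star_mem_traceOrthogonal hX))

lemma IsHermitian.imaginaryPart_mem_traceOrthogonal {W X : Matrix n n ℂ} (hW : W.IsHermitian)
    (hX : X ∈ traceOrthogonal W) : (ℑ X : Matrix n n ℂ) ∈ traceOrthogonal W := by
  rw [imaginaryPart_apply_coe]
  exact Submodule.smul_mem _ _
    (Submodule.smul_of_tower_mem _ _ (sub_mem hX (hW.star_mem_traceOrthogonal hX)))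

end

variable {d : ℕ}

lemma span_densityMatrix_le_traceOrthogonal (W : Matrix (Fin d) (Fin d) ℂ) :
    Submodule.span ℂ {ρ | IsDensityMatrix ρ ∧ (W * ρ).trace = 0} ≤ traceOrthogonal W :=
  Submodule.span_le.2 fun _ hρ => hρ.2

lemma PosSemidef.mem_span_densityMatrix {W A : Matrix (Fin d) (Fin d) ℂ} (hA : A.PosSemidef)
    (hWA : (W * A).trace = 0) :
    A ∈ Submodule.span ℂ {ρ | IsDensityMatrix ρ ∧ (W * ρ).trace = 0} := by
  by_cases htr : A.trace = 0
  · rw [hA.trace_eq_zero_iff.1 htr]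
    exact zero_mem _
  have hρ : IsDensityMatrix (A.trace⁻¹ • A) ∧ (W * (A.trace⁻¹ • A)).trace = 0 := by
    refine ⟨⟨hA.smul (inv_nonneg.2 hA.trace_nonneg), ?_⟩, ?_⟩
    · rw [trace_smul, smul_eq_mul, inv_mul_cancel₀ htr]
    · rw [Matrix.mul_smul, trace_smul, hWA, smul_zero]
  rw [← smul_inv_smul₀ htr A]
  exact Submodule.smul_mem _ _ (Submodule.subset_span hρ)

lemma IsHermitian.mem_span_densityMatrix {W H : Matrix (Fin d) (Fin d) ℂ} (hW : W.IsHermitian)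
    (hpos : ∃ i, 0 < hW.eigenvalues i) (hneg : ∃ j, hW.eigenvalues j < 0) (hH : H.IsHermitian)
    (hWH : H ∈ traceOrthogonal W) :
    H ∈ Submodule.span ℂ {ρ | IsDensityMatrix ρ ∧ (W * ρ).trace = 0} := by
  obtain ⟨Q, hQ, hWQ⟩ := hW.exists_posSemidef_trace_mul_one_add_eq_zero hpos hneg
  obtain ⟨c, hc, hcH⟩ := hH.exists_posSemidef_smul_one_add
  have hc' : (0 : ℂ) ≤ c := by exact_mod_cast hc
  have hA : ((c : ℂ) • (1 + Q)).PosSemidef := (PosSemidef.one.add hQ).smul hc'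
  have hB : ((c : ℂ) • (1 + Q) + H).PosSemidef := by
    rw [smul_add, add_right_comm]
    exact hcH.add (hQ.smul hc')
  have hWA : (W * ((c : ℂ) • (1 + Q))).trace = 0 := by
    rw [Matrix.mul_smul, trace_smul, hWQ, smul_zero]
  have hWB : (W * ((c : ℂ) • (1 + Q) + H)).trace = 0 := by
    rw [Matrix.mul_add, trace_add, hWA, zero_add]
    exact hWH
  rw [← add_sub_cancel_left ((c : ℂ) • (1 + Q)) H]
  exact sub_mem (hB.mem_span_densityMatrix hWB) (hA.mem_span_densityMatrix hWA)

end Matrix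

theorem stmt_16 {d : ℕ} (W : Matrix (Fin d) (Fin d) ℂ) (hW : W.IsHermitian)
    (hpos : ∃ i, 0 < hW.eigenvalues i) (hneg : ∃ j, hW.eigenvalues j < 0) :
    (Submodule.span ℂ
        {ρ : Matrix (Fin d) (Fin d) ℂ | IsDensityMatrix ρ ∧ (W * ρ).trace = 0} :
      Set (Matrix (Fin d) (Fin d) ℂ)) =
    {X : Matrix (Fin d) (Fin d) ℂ | (W * X).trace = 0} := by
  ext X
  refine ⟨fun hX => span_densityMatrix_le_traceOrthogonal W hX, fun hX => ?_⟩
  have hX : X ∈ traceOrthogonal W := hX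
  rw [SetLike.mem_coe, ← realPart_add_I_smul_imaginaryPart X]
  exact add_mem
    (hW.mem_span_densityMatrix hpos hneg (ℜ X).2.isHermitian (hW.realPart_mem_traceOrthogonal hX))
    (Submodule.smul_mem _ _ (hW.mem_span_densityMatrix hpos hneg (ℑ X).2.isHermitian
      (hW.imaginaryPart_mem_traceOrthogonal hX)))
end

section
/- Let W₁, W₂ be nonzero d×d Hermitian matrices with zero diagonals such that both C₀[Wᵢ] = {ρ density matrix : Tr(Wᵢρ) ≠ 0} are nonempty. Then C₀[W₁] = C₀[W₂] if and only if W₂ = r·W₁ for some nonzero real number r. -/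
/-!
The zero diagonals make `W₁, W₂` traceless, so both vanish on the maximally mixed state `1 / d`.
For a traceless Hermitian `H`, the matrix `(t • 1 + H) / (t d)` is a density matrix once
`t > ‖H‖`, and `Tr (Wᵢ ρ)` is then a positive multiple of `Tr (Wᵢ H)`. Hence equal sets `C₀[Wᵢ]`
mean that `W₁` and `W₂` have the same orthogonal complement among traceless Hermitian matrices
for the real inner product `Tr (A B)`. Applied to the component of `W₂` orthogonal to `W₁`,
this forces that component to vanish, so `W₂` is a real multiple of `W₁`.
-/

open Matrix ComplexOrder

namespace Matrix
variable {n : Type*} [Fintype n]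

open scoped MatrixOrder Matrix.Norms.L2Operator in
theorem IsHermitian.exists_pos_posSemidef_smul_one_add [DecidableEq n] {H : Matrix n n ℂ}
    (hH : H.IsHermitian) : ∃ t : ℝ, 0 < t ∧ (t • (1 : Matrix n n ℂ) + H).PosSemidef := by
  refine ⟨‖H‖ + 1, by positivity, ?_⟩
  have h := hH.isSelfAdjoint.neg_algebraMap_norm_le_self
  rw [le_iff, sub_neg_eq_add, add_comm, Algebra.algebraMap_eq_smul_one] at h
  rw [add_smul, one_smul, add_right_comm]
  exact h.add PosSemidef.one

theorem IsHermitian.star_trace_mul {A B : Matrix n n ℂ} (hA : A.IsHermitian)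
    (hB : B.IsHermitian) : star (A * B).trace = (A * B).trace := by
  rw [← trace_conjTranspose, conjTranspose_mul, hA.eq, hB.eq, trace_mul_comm]

theorem IsHermitian.exists_eq_smul_of_trace_mul_eq_zero_imp {W₁ W₂ : Matrix n n ℂ}
    (h₁ : W₁.IsHermitian) (h₂ : W₂.IsHermitian) (hW₁ : W₁.trace = 0) (hW₂ : W₂.trace = 0)
    (h : ∀ H : Matrix n n ℂ, H.IsHermitian → H.trace = 0 →
      (W₁ * H).trace = 0 → (W₂ * H).trace = 0) :
    ∃ r : ℝ, W₂ = (r : ℂ) • W₁ := by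
  -- `H` below is the component of `W₂` orthogonal to `W₁` for the real inner product
  -- `Tr (A * B)`; if `W₁ = 0`, then `c = 0` by the convention `x / 0 = 0` and all goes through.
  let c := (W₁ * W₂).trace / (W₁ * W₁).trace
  have hc : IsSelfAdjoint c := by
    rw [IsSelfAdjoint, star_div₀, h₁.star_trace_mul h₂, h₁.star_trace_mul h₁]
  let H := W₂ - c • W₁
  have hH : H.IsHermitian := h₂.sub (hc.smul h₁)
  have hHtr : H.trace = 0 := by rw [trace_sub, trace_smul, hW₁, hW₂, smul_zero, sub_zero]
  have hW₁H : (W₁ * H).trace = 0 := by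
    rcases eq_or_ne (W₁ * W₁).trace 0 with h0 | h0
    · have : W₁ = 0 := trace_conjTranspose_mul_self_eq_zero_iff.mp (by rwa [h₁.eq])
      rw [this, Matrix.zero_mul, trace_zero]
    · rw [Matrix.mul_sub, Matrix.mul_smul, trace_sub, trace_smul, smul_eq_mul,
        div_mul_cancel₀ _ h0, sub_self]
  have hHH : (Hᴴ * H).trace = 0 := by
    rw [hH.eq]
    calc (H * H).trace = (W₂ * H).trace - c * (W₁ * H).trace := by
          rw [Matrix.sub_mul, Matrix.smul_mul, trace_sub, trace_smul, smul_eq_mul]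
      _ = 0 := by rw [h H hH hHtr hW₁H, hW₁H, mul_zero, sub_zero]
  refine ⟨c.re, ?_⟩
  rw [Complex.conj_eq_iff_re.mp hc, ← sub_eq_zero]
  exact trace_conjTranspose_mul_self_eq_zero_iff.mp hHH

end Matrix

theorem exists_pos_isDensityMatrix_trace_mul_eq {d : ℕ} (hd : d ≠ 0)
    {H : Matrix (Fin d) (Fin d) ℂ} (hH : H.IsHermitian) (htr : H.trace = 0) :
    ∃ c : ℝ, 0 < c ∧ ∃ ρ, IsDensityMatrix ρ ∧
      ∀ W : Matrix (Fin d) (Fin d) ℂ, W.trace = 0 → (W * ρ).trace = c * (W * H).trace := by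
  obtain ⟨t, ht, hpsd⟩ := hH.exists_pos_posSemidef_smul_one_add
  have htd : (0 : ℝ) < t * d := by positivity
  refine ⟨(t * d)⁻¹, inv_pos.mpr htd, (t * d)⁻¹ • (t • 1 + H),
    ⟨hpsd.smul (inv_pos.mpr htd).le, ?_⟩, fun W hW => ?_⟩
  · rw [trace_smul, trace_add, trace_smul, trace_one, htr, Fintype.card_fin, add_zero,
      Complex.real_smul, Complex.real_smul]
    push_cast
    field_simp
  · rw [Matrix.mul_smul, Matrix.mul_add, Matrix.mul_smul, mul_one, trace_smul, trace_add,
      trace_smul, hW, smul_zero, zero_add, Complex.real_smul]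

theorem trace_mul_eq_zero_of_forall_isDensityMatrix {d : ℕ} {W₁ W₂ : Matrix (Fin d) (Fin d) ℂ}
    (hW₁ : W₁.trace = 0) (hW₂ : W₂.trace = 0)
    (h : ∀ ρ, IsDensityMatrix ρ → (W₁ * ρ).trace = 0 → (W₂ * ρ).trace = 0)
    {H : Matrix (Fin d) (Fin d) ℂ} (hH : H.IsHermitian) (hHtr : H.trace = 0)
    (hW₁H : (W₁ * H).trace = 0) : (W₂ * H).trace = 0 := by
  rcases eq_or_ne d 0 with rfl | hd
  · simp [Matrix.trace]
  obtain ⟨c, hc, ρ, hρ, hρW⟩ := exists_pos_isDensityMatrix_trace_mul_eq hd hH hHtr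
  have hW₂ρ := h ρ hρ (by rw [hρW W₁ hW₁, hW₁H, mul_zero])
  rw [hρW W₂ hW₂] at hW₂ρ
  exact (mul_eq_zero.mp hW₂ρ).resolve_left (Complex.ofReal_ne_zero.mpr hc.ne')

theorem stmt_17_general {d : ℕ} (W₁ W₂ : Matrix (Fin d) (Fin d) ℂ)
    (h₁ : W₁.IsHermitian) (h₂ : W₂.IsHermitian)
    (hd₁ : ∀ i, W₁ i i = 0) (hd₂ : ∀ i, W₂ i i = 0)
    (hne₂ : W₂ ≠ 0) :
    ({ρ : Matrix (Fin d) (Fin d) ℂ | IsDensityMatrix ρ ∧ (W₁ * ρ).trace ≠ 0} =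
     {ρ : Matrix (Fin d) (Fin d) ℂ | IsDensityMatrix ρ ∧ (W₂ * ρ).trace ≠ 0}) ↔
    ∃ r : ℝ, r ≠ 0 ∧ W₂ = (r : ℂ) • W₁ := by
  have hW₁ : W₁.trace = 0 := by simp [Matrix.trace, hd₁]
  have hW₂ : W₂.trace = 0 := by simp [Matrix.trace, hd₂]
  constructor
  · intro hset
    have hρ : ∀ ρ, IsDensityMatrix ρ → (W₁ * ρ).trace = 0 → (W₂ * ρ).trace = 0 :=
      fun ρ hρ h0 => by_contra fun h2 => ((Set.ext_iff.mp hset ρ).mpr ⟨hρ, h2⟩).2 h0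
    obtain ⟨r, hr⟩ := h₁.exists_eq_smul_of_trace_mul_eq_zero_imp h₂ hW₁ hW₂
      fun H hH hHtr => trace_mul_eq_zero_of_forall_isDensityMatrix hW₁ hW₂ hρ hH hHtr
    refine ⟨r, ?_, hr⟩
    rintro rfl
    exact hne₂ (by rw [hr, Complex.ofReal_zero, zero_smul])
  · rintro ⟨r, hr, rfl⟩
    ext ρ
    simp [trace_smul, hr]

theorem stmt_17 {d : ℕ} (W₁ W₂ : Matrix (Fin d) (Fin d) ℂ)
    (h₁ : W₁.IsHermitian) (h₂ : W₂.IsHermitian)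
    (hd₁ : ∀ i, W₁ i i = 0) (hd₂ : ∀ i, W₂ i i = 0)
    (hne₁ : W₁ ≠ 0) (hne₂ : W₂ ≠ 0)
    (hC₁ : ∃ ρ, IsDensityMatrix ρ ∧ (W₁ * ρ).trace ≠ 0)
    (hC₂ : ∃ σ, IsDensityMatrix σ ∧ (W₂ * σ).trace ≠ 0) :
    ({ρ : Matrix (Fin d) (Fin d) ℂ | IsDensityMatrix ρ ∧ (W₁ * ρ).trace ≠ 0} =
     {ρ : Matrix (Fin d) (Fin d) ℂ | IsDensityMatrix ρ ∧ (W₂ * ρ).trace ≠ 0}) ↔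
    ∃ r : ℝ, r ≠ 0 ∧ W₂ = (r : ℂ) • W₁ :=
  stmt_17_general W₁ W₂ h₁ h₂ hd₁ hd₂ hne₂
end
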